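/- arXiv:1308.5543 — 5 statements merged into one kernel-verified Lean document; each statement's English description precedes it below -/
import Mathlib

section
/- Assume there exists u ∈ (θ, ∞) with P(u) > 0. Then P(t) → −∞ as t → +∞, and there exists a unique h ∈ (θ, ∞) such that P(h) = 0. -/
/-! Since `γ i j ≤ C < 1`, each series `∑ⱼ γ i j ^ t` is strictly decreasing in `t` and bounded
by `C ^ (t - u) * ∑ⱼ γ i j ^ u`, so `P` is strictly decreasing on `(θ, ∞)` and
`P t ≤ (t - u) * (∑ i, η i) * log C + P u → -∞`. The majorant `γ i j ^ u` makes the series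
converge uniformly on `[u, ∞)`, so `P` is continuous there, and the intermediate value theorem
between `u` and a point where `P < 0` yields the zero; strict monotonicity makes it unique. -/

open Real Filter Set

section RpowSeries

variable {a : ℕ → ℝ}

theorem summable_rpow_of_le (ha0 : ∀ j, 0 < a j) (ha1 : ∀ j, a j ≤ 1) {s t : ℝ}
    (hs : Summable fun j => a j ^ s) (hst : s ≤ t) : Summable fun j => a j ^ t :=
  hs.of_nonneg_of_le (fun j => (rpow_pos_of_pos (ha0 j) t).le)
    (fun j => rpow_le_rpow_of_exponent_ge (ha0 j) (ha1 j) hst)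

theorem summable_rpow_of_sInf_lt (ha0 : ∀ j, 0 < a j) (ha1 : ∀ j, a j ≤ 1) (ha : Summable a)
    {t : ℝ} (ht : sInf {s : ℝ | 0 < s ∧ Summable fun j => a j ^ s} < t) :
    Summable fun j => a j ^ t := by
  have hne : {s : ℝ | 0 < s ∧ Summable fun j => a j ^ s}.Nonempty :=
    ⟨1, one_pos, by simpa only [rpow_one] using ha⟩
  obtain ⟨s, ⟨-, hs⟩, hst⟩ := exists_lt_of_csInf_lt hne ht
  exact summable_rpow_of_le ha0 ha1 hs hst.le

theorem tsum_rpow_pos (ha0 : ∀ j, 0 < a j) {t : ℝ} (ht : Summable fun j => a j ^ t) :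
    0 < ∑' j, a j ^ t :=
  ht.tsum_pos (fun j => (rpow_pos_of_pos (ha0 j) t).le) 0 (rpow_pos_of_pos (ha0 0) t)

theorem tsum_rpow_strictAntiOn (ha0 : ∀ j, 0 < a j) (ha1 : ∀ j, a j < 1) :
    StrictAntiOn (fun t : ℝ => ∑' j, a j ^ t) {t | Summable fun j => a j ^ t} :=
  fun _ hs _ ht hst => ht.tsum_lt_tsum (i := 0)
    (fun j => rpow_le_rpow_of_exponent_ge (ha0 j) (ha1 j).le hst.le)
    (rpow_lt_rpow_of_exponent_gt (ha0 0) (ha1 0) hst) hs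

theorem rpow_le_rpow_sub_mul_rpow {x C u t : ℝ} (hx : 0 < x) (hxC : x ≤ C) (hut : u ≤ t) :
    x ^ t ≤ C ^ (t - u) * x ^ u := by
  calc x ^ t = x ^ (t - u) * x ^ u := by rw [← rpow_add hx, sub_add_cancel]
    _ ≤ C ^ (t - u) * x ^ u := by gcongr

theorem log_tsum_rpow_le (ha0 : ∀ j, 0 < a j) {C : ℝ} (hC : 0 < C) (haC : ∀ j, a j ≤ C)
    {u t : ℝ} (hu : Summable fun j => a j ^ u) (hut : u ≤ t) :
    log (∑' j, a j ^ t) ≤ (t - u) * log C + log (∑' j, a j ^ u) := by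
  have hle : ∀ j, a j ^ t ≤ C ^ (t - u) * a j ^ u :=
    fun j => rpow_le_rpow_sub_mul_rpow (ha0 j) (haC j) hut
  have ht : Summable fun j => a j ^ t :=
    (hu.mul_left _).of_nonneg_of_le (fun j => (rpow_pos_of_pos (ha0 j) t).le) hle
  calc log (∑' j, a j ^ t) ≤ log (C ^ (t - u) * ∑' j, a j ^ u) := by
        rw [← tsum_mul_left]
        exact log_le_log (tsum_rpow_pos ha0 ht) (ht.tsum_le_tsum hle (hu.mul_left _))
    _ = (t - u) * log C + log (∑' j, a j ^ u) := by
        rw [log_mul (rpow_pos_of_pos hC _).ne' (tsum_rpow_pos ha0 hu).ne', log_rpow hC]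

theorem continuousOn_tsum_rpow (ha0 : ∀ j, 0 < a j) (ha1 : ∀ j, a j ≤ 1) {u : ℝ}
    (hu : Summable fun j => a j ^ u) : ContinuousOn (fun t => ∑' j, a j ^ t) (Ici u) := by
  refine continuousOn_tsum (fun j => (Real.continuous_const_rpow (ha0 j).ne').continuousOn) hu ?_
  intro j t ht
  rw [norm_of_nonneg (rpow_pos_of_pos (ha0 j) t).le]
  exact rpow_le_rpow_of_exponent_ge (ha0 j) (ha1 j) ht

end RpowSeries

noncomputable def pressure {ι : Type*} [Fintype ι] (η : ι → ℝ) (γ : ι → ℕ → ℝ) (t : ℝ) : ℝ :=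
  ∑ i, η i * log (∑' j, γ i j ^ t)

section Pressure

variable {ι : Type*} [Fintype ι] {η : ι → ℝ} {γ : ι → ℕ → ℝ}

theorem pressure_strictAntiOn [Nonempty ι] (hη : ∀ i, 0 < η i) (hγ0 : ∀ i j, 0 < γ i j)
    (hγ1 : ∀ i j, γ i j < 1) :
    StrictAntiOn (pressure η γ) {t | ∀ i, Summable fun j => γ i j ^ t} := by
  intro s hs t ht hst
  refine Finset.sum_lt_sum_of_nonempty Finset.univ_nonempty fun i _ => ?_
  refine mul_lt_mul_of_pos_left ?_ (hη i)
  exact log_lt_log (tsum_rpow_pos (hγ0 i) (ht i))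
    (tsum_rpow_strictAntiOn (hγ0 i) (hγ1 i) (hs i) (ht i) hst)

theorem pressure_le (hη : ∀ i, 0 ≤ η i) (hγ0 : ∀ i j, 0 < γ i j) {C : ℝ} (hC : 0 < C)
    (hγC : ∀ i j, γ i j ≤ C) {u t : ℝ} (hu : ∀ i, Summable fun j => γ i j ^ u) (hut : u ≤ t) :
    pressure η γ t ≤ (t - u) * ((∑ i, η i) * log C) + pressure η γ u := by
  calc pressure η γ t
      ≤ ∑ i, η i * ((t - u) * log C + log (∑' j, γ i j ^ u)) :=
        Finset.sum_le_sum fun i _ =>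
          mul_le_mul_of_nonneg_left (log_tsum_rpow_le (hγ0 i) hC (hγC i) (hu i) hut) (hη i)
    _ = (t - u) * ((∑ i, η i) * log C) + pressure η γ u := by
        simp only [pressure, mul_add, Finset.sum_add_distrib, Finset.sum_mul, Finset.mul_sum]
        congr 1
        exact Finset.sum_congr rfl fun i _ => by ring

theorem tendsto_pressure_atBot [Nonempty ι] (hη : ∀ i, 0 < η i) (hγ0 : ∀ i j, 0 < γ i j)
    {C : ℝ} (hC0 : 0 < C) (hC1 : C < 1) (hγC : ∀ i j, γ i j ≤ C) {u : ℝ}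
    (hu : ∀ i, Summable fun j => γ i j ^ u) : Tendsto (pressure η γ) atTop atBot := by
  have hslope : (∑ i, η i) * log C < 0 :=
    mul_neg_of_pos_of_neg (Finset.sum_pos (fun i _ => hη i) Finset.univ_nonempty)
      (log_neg hC0 hC1)
  refine tendsto_atBot_mono' atTop ?_ (tendsto_atBot_add_const_right _ (pressure η γ u)
    ((tendsto_atTop_add_const_right _ (-u) tendsto_id).atTop_mul_const_of_neg hslope))
  filter_upwards [eventually_ge_atTop u] with t hut
  simpa only [id, sub_eq_add_neg] using pressure_le (fun i => (hη i).le) hγ0 hC0 hγC hu hut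

theorem continuousOn_pressure (hγ0 : ∀ i j, 0 < γ i j) (hγ1 : ∀ i j, γ i j ≤ 1) {u : ℝ}
    (hu : ∀ i, Summable fun j => γ i j ^ u) : ContinuousOn (pressure η γ) (Ici u) :=
  continuousOn_finsetSum _ fun i _ => continuousOn_const.mul <|
    (continuousOn_tsum_rpow (hγ0 i) (hγ1 i) (hu i)).log fun _ ht =>
      (tsum_rpow_pos (hγ0 i) (summable_rpow_of_le (hγ0 i) (hγ1 i) (hu i) ht)).ne'

end Pressure

theorem existsUnique_eq_zero_of_strictAntiOn {f : ℝ → ℝ} {s : Set ℝ} {u : ℝ}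
    (hf : StrictAntiOn f s) (hus : Ici u ⊆ s) (hcont : ContinuousOn f (Ici u))
    (hlim : Tendsto f atTop atBot) (hu : 0 < f u) : ∃! x, x ∈ s ∧ f x = 0 := by
  obtain ⟨v, hv, huv⟩ :=
    ((hlim.eventually (eventually_lt_atBot 0)).and (eventually_ge_atTop u)).exists
  obtain ⟨x, hx, hfx⟩ := intermediate_value_Icc' huv (hcont.mono Icc_subset_Ici_self) ⟨hv.le, hu.le⟩
  exact ⟨x, ⟨hus hx.1, hfx⟩, fun y ⟨hy, hfy⟩ => hf.injOn hy (hus hx.1) (hfy.trans hfx.symm)⟩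

theorem pressure_unique_zero_general
    (m : ℕ) (γ : Fin m → ℕ → ℝ)
    (hγpos : ∀ i j, 0 < γ i j)
    (hγsum : ∀ i, Summable (fun j => γ i j))
    (hγsup : ∃ C : ℝ, C < 1 ∧ ∀ i j, γ i j ≤ C)
    (θ : ℝ)
    (hθ : θ = ⨆ i : Fin m, sInf {t : ℝ | 0 < t ∧ Summable (fun j => γ i j ^ t)})
    (η : Fin m → ℝ) (hηpos : ∀ i, 0 < η i)
    (P : ℝ → ℝ)
    (hP : ∀ t : ℝ, P t = ∑ i, η i * Real.log (∑' j, γ i j ^ t))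
    (hu : ∃ u ∈ Set.Ioi θ, 0 < P u) :
    Tendsto P atTop atBot ∧ ∃! h : ℝ, h ∈ Set.Ioi θ ∧ P h = 0 := by
  obtain ⟨C, hC1, hγC⟩ := hγsup
  obtain ⟨u, huθ, hPu⟩ := hu
  obtain rfl : P = pressure η γ := funext hP
  have : Nonempty (Fin m) := by
    by_contra hempty
    simp [pressure, not_nonempty_iff.mp hempty] at hPu
  have hγ1 : ∀ i j, γ i j < 1 := fun i j => (hγC i j).trans_lt hC1
  have hC0 : 0 < C := (hγpos (Classical.arbitrary _) 0).trans_le (hγC _ 0)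
  have hsum : Ioi θ ⊆ {t | ∀ i, Summable fun j => γ i j ^ t} := fun t ht i =>
    summable_rpow_of_sInf_lt (hγpos i) (fun j => (hγ1 i j).le) (hγsum i)
      ((le_ciSup (finite_range _).bddAbove i).trans_lt (hθ ▸ ht : _ < t))
  have hlim := tendsto_pressure_atBot hηpos hγpos hC0 hC1 hγC (hsum huθ)
  exact ⟨hlim, existsUnique_eq_zero_of_strictAntiOn
    ((pressure_strictAntiOn hηpos hγpos hγ1).mono hsum) (Ici_subset_Ioi.2 huθ)
    (continuousOn_pressure hγpos (fun i j => (hγ1 i j).le) (hsum huθ)) hlim hPu⟩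

/-- If there is `u ∈ (θ, ∞)` with `P u > 0`, then `P t → -∞` as `t → ∞`,
and there exists a unique `h ∈ (θ, ∞)` with `P h = 0`. -/
theorem pressure_unique_zero
    (m : ℕ) (hm : 1 ≤ m) (γ : Fin m → ℕ → ℝ)
    (hγpos : ∀ i j, 0 < γ i j)
    (hγsum : ∀ i, Summable (fun j => γ i j))
    (hγsup : ∃ C : ℝ, C < 1 ∧ ∀ i j, γ i j ≤ C)
    (θ : ℝ)
    (hθ : θ = ⨆ i : Fin m, sInf {t : ℝ | 0 < t ∧ Summable (fun j => γ i j ^ t)})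
    (η : Fin m → ℝ) (hηpos : ∀ i, 0 < η i) (hηsum : ∑ i, η i = 1)
    (P : ℝ → ℝ)
    (hP : ∀ t : ℝ, P t = ∑ i, η i * Real.log (∑' j, γ i j ^ t))
    (hu : ∃ u ∈ Set.Ioi θ, 0 < P u) :
    Tendsto P atTop atBot ∧ ∃! h : ℝ, h ∈ Set.Ioi θ ∧ P h = 0 :=
  pressure_unique_zero_general m γ hγpos hγsum hγsup θ hθ η hηpos P hP hu
end

section
/- Let h ∈ (θ, ∞) be the unique zero of P. Then for any reals s_*, s^* with θ < s_* < h < s^*, there exists a positive integer N₀ such that for every integer n > N₀ one has ∏_{i=1}^m (∑_{j=1}^∞ γ_{ij}^{s^*})^{N_i(n)} < 1 < ∏_{i=1}^m (∑_{j=1}^∞ γ_{ij}^{s_*})^{N_i(n)}; equivalently, ∑_{σ∈ℕ^n} c_σ^{s^*} < 1 < ∑_{σ∈ℕ^n} c_σ^{s_*}. -/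
/-!
Above `θ` every series `Zᵢ(t) = ∑ⱼ γᵢⱼ^t` converges and is strictly decreasing in `t`
(since `γᵢⱼ < 1`), so the pressure `P` is strictly decreasing there and `P s_* > P h = 0 > P s^*`. The logarithm of
`∏ᵢ Zᵢ(t)^{Nᵢ(n)}` is `n · ∑ᵢ (Nᵢ(n)/n) log Zᵢ(t)`, and the frequencies `Nᵢ(n)/n → ηᵢ` make the
average tend to `P t`; hence the product eventually lies on the same side of `1` as `P t` of `0`.
The sum over words factorises into that product.
-/

open Real Filter Topology

section RpowSeries

variable {α : Type*} {x : α → ℝ} {s t : ℝ}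

theorem Summable.rpow_of_le (hx0 : ∀ a, 0 < x a) (hx1 : ∀ a, x a ≤ 1) (hst : s ≤ t)
    (hs : Summable fun a => x a ^ s) : Summable fun a => x a ^ t :=
  hs.of_nonneg_of_le (fun a => (rpow_pos_of_pos (hx0 a) t).le)
    (fun a => rpow_le_rpow_of_exponent_ge (hx0 a) (hx1 a) hst)

theorem summable_rpow_of_sInf_lt_s2 (hx0 : ∀ a, 0 < x a) (hx1 : ∀ a, x a ≤ 1)
    (hne : {r : ℝ | 0 < r ∧ Summable fun a => x a ^ r}.Nonempty)
    (ht : sInf {r : ℝ | 0 < r ∧ Summable fun a => x a ^ r} < t) :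
    Summable fun a => x a ^ t := by
  obtain ⟨s, ⟨-, hs⟩, hst⟩ := exists_lt_of_csInf_lt hne ht
  exact hs.rpow_of_le hx0 hx1 hst.le

theorem tsum_rpow_lt_tsum_rpow [Nonempty α] (hx0 : ∀ a, 0 < x a) (hx1 : ∀ a, x a < 1)
    (hst : s < t) (hs : Summable fun a => x a ^ s) : ∑' a, x a ^ t < ∑' a, x a ^ s :=
  Summable.tsum_lt_tsum (i := Classical.arbitrary α)
    (fun a => (rpow_lt_rpow_of_exponent_gt (hx0 a) (hx1 a) hst).le)
    (rpow_lt_rpow_of_exponent_gt (hx0 _) (hx1 _) hst)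
    (hs.rpow_of_le hx0 (fun a => (hx1 a).le) hst.le) hs

end RpowSeries

theorem hasSum_fin_pi_prod {α : Type*} (n : ℕ) (f : Fin n → α → ℝ) (hf0 : ∀ k a, 0 ≤ f k a)
    (hf : ∀ k, Summable (f k)) :
    HasSum (fun σ : Fin n → α => ∏ k, f k (σ k)) (∏ k, ∑' a, f k a) := by
  induction n with
  | zero => simp [hasSum_unique]
  | succ n ih =>
    have htail : HasSum (fun σ : Fin n → α => ∏ k : Fin n, f k.succ (σ k))
        (∏ k, ∑' a, f (Fin.succ k) a) :=
      ih _ (fun k => hf0 k.succ) (fun k => hf k.succ)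
    have htail0 : 0 ≤ fun σ : Fin n → α => ∏ k : Fin n, f k.succ (σ k) := fun σ =>
      Finset.prod_nonneg fun k _ => hf0 k.succ (σ k)
    have hsum := (hf 0).mul_of_nonneg htail.summable (hf0 0) htail0
    rw [← (Fin.consEquiv fun _ => α).hasSum_iff]
    simpa only [Function.comp_def, Fin.prod_univ_succ, Fin.consEquiv_apply, Fin.cons_zero,
      Fin.cons_succ] using (hf 0).hasSum.mul htail hsum

theorem prod_fin_comp_eq_prod_pow_card {ι M : Type*} [Fintype ι] [DecidableEq ι] [CommMonoid M]
    (ω : ℕ → ι) (F : ι → M) (n : ℕ) :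
    ∏ k : Fin n, F (ω k) = ∏ i, F i ^ ((Finset.range n).filter (fun k => ω k = i)).card := by
  rw [Fin.prod_univ_eq_prod_range (fun k => F (ω k)),
    ← Finset.prod_fiberwise_of_maps_to' (fun k _ => Finset.mem_univ (ω k))]
  exact Finset.prod_congr rfl fun i _ => Finset.prod_const (F i)

theorem tsum_rpow_prod_comp_eq_prod_pow_card {ι : Type*} [Fintype ι] [DecidableEq ι]
    (ω : ℕ → ι) {γ : ι → ℕ → ℝ} (hγ : ∀ i j, 0 < γ i j) {t : ℝ}
    (ht : ∀ i, Summable fun j => γ i j ^ t) (n : ℕ) :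
    ∑' σ : Fin n → ℕ, (∏ k : Fin n, γ (ω k) (σ k)) ^ t =
      ∏ i, (∑' j, γ i j ^ t) ^ ((Finset.range n).filter (fun k => ω k = i)).card := by
  simp only [← finsetProd_rpow _ _ fun k _ => (hγ _ _).le]
  rw [(hasSum_fin_pi_prod n _ (fun k j => (rpow_pos_of_pos (hγ _ j) t).le)
    fun k => ht (ω k)).tsum_eq, prod_fin_comp_eq_prod_pow_card ω fun i => ∑' j, γ i j ^ t]

section Frequencies

variable {ι : Type*} [Fintype ι] {a : ι → ℝ} {N : ℕ → ι → ℕ} {η : ι → ℝ}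

theorem tendsto_log_prod_pow_div (ha : ∀ i, a i ≠ 0)
    (hN : ∀ i, Tendsto (fun n => (N n i : ℝ) / n) atTop (𝓝 (η i))) :
    Tendsto (fun n : ℕ => log (∏ i, a i ^ N n i) / n) atTop (𝓝 (∑ i, η i * log (a i))) := by
  have hlog : ∀ n : ℕ, log (∏ i, a i ^ N n i) / n = ∑ i, (N n i : ℝ) / n * log (a i) := by
    intro n
    rw [log_prod fun i _ => pow_ne_zero _ (ha i), Finset.sum_div]
    simp only [log_pow, mul_div_right_comm]
  simpa only [hlog] using tendsto_finsetSum _ fun i _ => (hN i).mul_const (log (a i))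

theorem eventually_one_lt_prod_pow (ha : ∀ i, 0 < a i)
    (hN : ∀ i, Tendsto (fun n => (N n i : ℝ) / n) atTop (𝓝 (η i)))
    (hpos : 0 < ∑ i, η i * log (a i)) : ∀ᶠ n in atTop, 1 < ∏ i, a i ^ N n i := by
  filter_upwards [(tendsto_log_prod_pow_div (fun i => (ha i).ne') hN).eventually_const_lt hpos,
    eventually_gt_atTop 0] with n hlog hn
  rw [← log_pos_iff (Finset.prod_nonneg fun i _ => pow_nonneg (ha i).le _)]
  exact (div_pos_iff_of_pos_right (Nat.cast_pos.mpr hn)).mp hlog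

theorem eventually_prod_pow_lt_one (ha : ∀ i, 0 < a i)
    (hN : ∀ i, Tendsto (fun n => (N n i : ℝ) / n) atTop (𝓝 (η i)))
    (hneg : ∑ i, η i * log (a i) < 0) : ∀ᶠ n in atTop, ∏ i, a i ^ N n i < 1 := by
  filter_upwards [(tendsto_log_prod_pow_div (fun i => (ha i).ne') hN).eventually_lt_const hneg]
    with n hlog
  rw [← log_neg_iff (Finset.prod_pos fun i _ => pow_pos (ha i) _)]
  exact neg_of_div_neg_left hlog n.cast_nonneg

end Frequencies

theorem pressure_zero_partition_sums_general
    (m : ℕ) (hm : 1 ≤ m) (γ : Fin m → ℕ → ℝ)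
    (hγpos : ∀ i j, 0 < γ i j)
    (hγsum : ∀ i, Summable (fun j => γ i j))
    (hγsup : ∃ C : ℝ, C < 1 ∧ ∀ i j, γ i j ≤ C)
    (θ : ℝ)
    (hθ : θ = ⨆ i : Fin m, sInf {t : ℝ | 0 < t ∧ Summable (fun j => γ i j ^ t)})
    (η : Fin m → ℝ) (hηpos : ∀ i, 0 < η i)
    (P : ℝ → ℝ)
    (hP : ∀ t : ℝ, P t = ∑ i, η i * Real.log (∑' j, γ i j ^ t))
    (ω : ℕ → Fin m)
    (hfreq : ∀ i, Tendsto
      (fun n => (((Finset.range n).filter (fun k => ω k = i)).card : ℝ) / n)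
      atTop (nhds (η i)))
    (h : ℝ) (hh : h ∈ Set.Ioi θ ∧ P h = 0)
    (sstar shigh : ℝ) (h1 : θ < sstar) (h2 : sstar < h) (h3 : h < shigh) :
    ∃ N₀ : ℕ, 0 < N₀ ∧ ∀ n : ℕ, N₀ < n →
      ((∏ i : Fin m, (∑' j, γ i j ^ shigh) ^ (((Finset.range n).filter (fun k => ω k = i)).card)) < 1
        ∧ 1 < ∏ i : Fin m, (∑' j, γ i j ^ sstar) ^ (((Finset.range n).filter (fun k => ω k = i)).card))
      ∧ ((∑' σ : Fin n → ℕ, (∏ k : Fin n, γ (ω k) (σ k)) ^ shigh) < 1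
        ∧ 1 < ∑' σ : Fin n → ℕ, (∏ k : Fin n, γ (ω k) (σ k)) ^ sstar) := by
  obtain ⟨C, hC1, hγC⟩ := hγsup
  have : Nonempty (Fin m) := ⟨⟨0, hm⟩⟩
  have hγ1 i j : γ i j < 1 := (hγC i j).trans_lt hC1
  have hsummable t (ht : θ < t) i : Summable fun j => γ i j ^ t :=
    summable_rpow_of_sInf_lt_s2 (hγpos i) (fun j => (hγ1 i j).le)
      ⟨1, one_pos, by simpa using hγsum i⟩ ((hθ ▸ le_ciSup (Finite.bddAbove_range _) i).trans_lt ht)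
  have hZpos t (ht : θ < t) i : 0 < ∑' j, γ i j ^ t :=
    (hsummable t ht i).tsum_pos (fun j => (rpow_pos_of_pos (hγpos i j) t).le) 0
      (rpow_pos_of_pos (hγpos i 0) t)
  have hP_anti s t (hs : θ < s) (hst : s < t) : P t < P s := by
    rw [hP, hP]
    refine Finset.sum_lt_sum_of_nonempty Finset.univ_nonempty fun i _ =>
      mul_lt_mul_of_pos_left (log_lt_log (hZpos t (hs.trans hst) i) ?_) (hηpos i)
    exact tsum_rpow_lt_tsum_rpow (hγpos i) (hγ1 i) hst (hsummable s hs i)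
  have hθhigh : θ < shigh := h1.trans (h2.trans h3)
  have hPhigh : P shigh < 0 := hh.2 ▸ hP_anti h shigh hh.1 h3
  have hPstar : 0 < P sstar := hh.2 ▸ hP_anti sstar h h1 h2
  rw [hP] at hPhigh hPstar
  obtain ⟨N, hN⟩ := ((eventually_prod_pow_lt_one (hZpos shigh hθhigh) hfreq
    hPhigh).and (eventually_one_lt_prod_pow (hZpos sstar h1) hfreq hPstar)).exists_forall_of_atTop
  refine ⟨N + 1, N.succ_pos, fun n hn => ?_⟩
  obtain ⟨hlow, hhigh⟩ := hN n (by omega)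
  rw [tsum_rpow_prod_comp_eq_prod_pow_card ω hγpos (hsummable shigh hθhigh),
    tsum_rpow_prod_comp_eq_prod_pow_card ω hγpos (hsummable sstar h1)]
  exact ⟨⟨hlow, hhigh⟩, hlow, hhigh⟩

/-- If `h ∈ (θ, ∞)` is the (unique) zero of the pressure `P`, then for any
`s_* , s^*` with `θ < s_* < h < s^*` there is a positive integer `N₀` such that for all
`n > N₀`: `∏ᵢ (∑ⱼ γᵢⱼ^{s^*})^{Nᵢ(n)} < 1 < ∏ᵢ (∑ⱼ γᵢⱼ^{s_*})^{Nᵢ(n)}`, equivalently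
`∑_{σ ∈ ℕⁿ} c_σ^{s^*} < 1 < ∑_{σ ∈ ℕⁿ} c_σ^{s_*}`. -/
theorem pressure_zero_partition_sums
    (m : ℕ) (hm : 1 ≤ m) (γ : Fin m → ℕ → ℝ)
    (hγpos : ∀ i j, 0 < γ i j)
    (hγsum : ∀ i, Summable (fun j => γ i j))
    (hγsup : ∃ C : ℝ, C < 1 ∧ ∀ i j, γ i j ≤ C)
    (θ : ℝ)
    (hθ : θ = ⨆ i : Fin m, sInf {t : ℝ | 0 < t ∧ Summable (fun j => γ i j ^ t)})
    (η : Fin m → ℝ) (hηpos : ∀ i, 0 < η i) (hηsum : ∑ i, η i = 1)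
    (P : ℝ → ℝ)
    (hP : ∀ t : ℝ, P t = ∑ i, η i * Real.log (∑' j, γ i j ^ t))
    (hu : ∃ u ∈ Set.Ioi θ, 0 < P u)
    (ω : ℕ → Fin m)
    (hfreq : ∀ i, Tendsto
      (fun n => (((Finset.range n).filter (fun k => ω k = i)).card : ℝ) / n)
      atTop (nhds (η i)))
    (h : ℝ) (hh : h ∈ Set.Ioi θ ∧ P h = 0)
    (sstar shigh : ℝ) (h1 : θ < sstar) (h2 : sstar < h) (h3 : h < shigh) :
    ∃ N₀ : ℕ, 0 < N₀ ∧ ∀ n : ℕ, N₀ < n →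
      ((∏ i : Fin m, (∑' j, γ i j ^ shigh) ^ (((Finset.range n).filter (fun k => ω k = i)).card)) < 1
        ∧ 1 < ∏ i : Fin m, (∑' j, γ i j ^ sstar) ^ (((Finset.range n).filter (fun k => ω k = i)).card))
      ∧ ((∑' σ : Fin n → ℕ, (∏ k : Fin n, γ (ω k) (σ k)) ^ shigh) < 1
        ∧ 1 < ∑' σ : Fin n → ℕ, (∏ k : Fin n, γ (ω k) (σ k)) ^ sstar) :=
  pressure_zero_partition_sums_general m hm γ hγpos hγsum hγsup θ hθ η hηpos P hP ω hfreq h hh sstar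
    shigh h1 h2 h3
end

section
/- For each M ≥ 2 let h_M ∈ (0, ∞) be the unique zero of P_M, and let h ∈ (θ, ∞) be the unique zero of P. Then the sequence (h_M) is nondecreasing, i.e. h_M ≤ h_{M+1} for all M ≥ 2, and h_M → h as M → ∞. -/
open Real Filter

/-- The zeros `h_M` of the truncated pressures `P_M` form a nondecreasing
sequence converging to the zero `h` of the full pressure `P`. -/
theorem truncated_zeros_mono_tendsto
    (m : ℕ) (hm : 1 ≤ m) (γ : Fin m → ℕ → ℝ)
    (hγpos : ∀ i j, 0 < γ i j)
    (hγsum : ∀ i, Summable (fun j => γ i j))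
    (hγsup : ∃ C : ℝ, C < 1 ∧ ∀ i j, γ i j ≤ C)
    (θ : ℝ)
    (hθ : θ = ⨆ i : Fin m, sInf {t : ℝ | 0 < t ∧ Summable (fun j => γ i j ^ t)})
    (η : Fin m → ℝ) (hηpos : ∀ i, 0 < η i) (hηsum : ∑ i, η i = 1)
    (P : ℝ → ℝ)
    (hP : ∀ t : ℝ, P t = ∑ i, η i * Real.log (∑' j, γ i j ^ t))
    (hu : ∃ u ∈ Set.Ioi θ, 0 < P u)
    (h : ℝ) (hh : h ∈ Set.Ioi θ ∧ P h = 0)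
    (hseq : ℕ → ℝ)
    (hhseq : ∀ M : ℕ, 2 ≤ M → 0 < hseq M ∧
      ∑ i, η i * Real.log (∑ j ∈ Finset.range M, γ i j ^ (hseq M)) = 0) :
    (∀ M : ℕ, 2 ≤ M → hseq M ≤ hseq (M + 1)) ∧ Tendsto hseq atTop (nhds h) := by
  obtain ⟨C, hC1, hγC⟩ := hγsup
  have hγlt1 : ∀ i j, γ i j < 1 := fun i j => lt_of_le_of_lt (hγC i j) hC1
  haveI : Nonempty (Fin m) := Fin.pos_iff_nonempty.mp hm
  -- summability of the full series for t > θ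
  have hsumm : ∀ (i : Fin m) (t : ℝ), θ < t → Summable (fun j => γ i j ^ t) := by
    intro i t ht
    have h1 : (1:ℝ) ∈ {t : ℝ | 0 < t ∧ Summable (fun j => γ i j ^ t)} := by
      refine ⟨one_pos, ?_⟩
      simpa [Real.rpow_one] using hγsum i
    have hne : Set.Nonempty {t : ℝ | 0 < t ∧ Summable fun j => γ i j ^ t} := ⟨1, h1⟩
    have hle : sInf {t : ℝ | 0 < t ∧ Summable fun j => γ i j ^ t} ≤ θ := by
      rw [hθ]
      exact le_ciSup (Finite.bddAbove_range
        (fun i : Fin m => sInf {t : ℝ | 0 < t ∧ Summable fun j => γ i j ^ t})) i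
    obtain ⟨s, hs, hst⟩ := exists_lt_of_csInf_lt hne (lt_of_le_of_lt hle ht)
    exact Summable.of_nonneg_of_le
      (fun j => (Real.rpow_pos_of_pos (hγpos i j) t).le)
      (fun j => Real.rpow_le_rpow_of_exponent_ge (hγpos i j) (hγlt1 i j).le hst.le) hs.2
  -- positivity of partial sums
  have hpos : ∀ (M : ℕ), 1 ≤ M → ∀ (i : Fin m) (t : ℝ),
      0 < ∑ j ∈ Finset.range M, γ i j ^ t := by
    intro M hM i t
    apply Finset.sum_pos (fun j _ => Real.rpow_pos_of_pos (hγpos i j) t)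
    exact ⟨0, Finset.mem_range.mpr (by omega)⟩
  -- strict antitonicity of truncated pressure
  have hQanti : ∀ (M : ℕ), 1 ≤ M → ∀ s t : ℝ, s < t →
      (∑ i, η i * Real.log (∑ j ∈ Finset.range M, γ i j ^ t)) <
      (∑ i, η i * Real.log (∑ j ∈ Finset.range M, γ i j ^ s)) := by
    intro M hM s t hst
    apply Finset.sum_lt_sum_of_nonempty Finset.univ_nonempty
    intro i _
    apply mul_lt_mul_of_pos_left _ (hηpos i)
    apply Real.log_lt_log (hpos M hM i t)
    apply Finset.sum_lt_sum_of_nonempty ⟨0, Finset.mem_range.mpr (by omega)⟩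
    intro j _
    exact Real.rpow_lt_rpow_of_exponent_gt (hγpos i j) (hγlt1 i j) hst
  -- monotonicity of truncated pressure in M
  have hQmono : ∀ (M N : ℕ), 1 ≤ M → M ≤ N → ∀ t : ℝ,
      (∑ i, η i * Real.log (∑ j ∈ Finset.range M, γ i j ^ t)) ≤
      (∑ i, η i * Real.log (∑ j ∈ Finset.range N, γ i j ^ t)) := by
    intro M N hM hMN t
    apply Finset.sum_le_sum
    intro i _
    apply mul_le_mul_of_nonneg_left _ (hηpos i).le
    apply Real.log_le_log (hpos M hM i t)
    apply Finset.sum_le_sum_of_subset_of_nonneg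
      (Finset.range_subset_range.mpr hMN)
      (fun j _ _ => (Real.rpow_pos_of_pos (hγpos i j) t).le)
  -- truncated pressure is at most P for t > θ
  have hQP : ∀ (M : ℕ), 1 ≤ M → ∀ t : ℝ, θ < t →
      (∑ i, η i * Real.log (∑ j ∈ Finset.range M, γ i j ^ t)) ≤ P t := by
    intro M hM t ht
    rw [hP]
    apply Finset.sum_le_sum
    intro i _
    apply mul_le_mul_of_nonneg_left _ (hηpos i).le
    apply Real.log_le_log (hpos M hM i t)
    exact Summable.sum_le_tsum _ (fun j _ => (Real.rpow_pos_of_pos (hγpos i j) t).le) (hsumm i t ht)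
  -- monotonicity of the zeros
  have mono : ∀ M : ℕ, 2 ≤ M → hseq M ≤ hseq (M + 1) := by
    intro M hM
    obtain ⟨hp, he⟩ := hhseq M hM
    obtain ⟨hp', he'⟩ := hhseq (M + 1) (by omega)
    by_contra hcon
    push_neg at hcon
    have h1 := hQanti M (by omega) _ _ hcon
    rw [he] at h1
    have h2 := hQmono M (M + 1) (by omega) (by omega) (hseq (M + 1))
    rw [he'] at h2
    linarith
  -- zeros are bounded above by h
  have hle_h : ∀ M : ℕ, 2 ≤ M → hseq M ≤ h := by
    intro M hM
    obtain ⟨hp, he⟩ := hhseq M hM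
    by_contra hcon
    push_neg at hcon
    have h1 := hQanti M (by omega) _ _ hcon
    rw [he] at h1
    have h2 := hQP M (by omega) h hh.1
    rw [hh.2] at h2
    linarith
  -- P is positive on (θ, h)
  have hPpos : ∀ t : ℝ, θ < t → t < h → 0 < P t := by
    intro t ht hth
    have hlt : P h < P t := by
      rw [hP, hP]
      apply Finset.sum_lt_sum_of_nonempty Finset.univ_nonempty
      intro i _
      apply mul_lt_mul_of_pos_left _ (hηpos i)
      apply Real.log_lt_log
      · exact Summable.tsum_pos (hsumm i h hh.1) (fun j => (Real.rpow_pos_of_pos (hγpos i j) h).le)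
          0 (Real.rpow_pos_of_pos (hγpos i 0) h)
      · apply Summable.tsum_lt_tsum (i := 0)
          (fun j => Real.rpow_le_rpow_of_exponent_ge (hγpos i j) (hγlt1 i j).le hth.le)
          (Real.rpow_lt_rpow_of_exponent_gt (hγpos i 0) (hγlt1 i 0) hth)
          (hsumm i h hh.1) (hsumm i t ht)
    rw [hh.2] at hlt
    exact hlt
  -- truncated pressures converge pointwise to P for t > θ
  have hQtendsto : ∀ t : ℝ, θ < t →
      Tendsto (fun M => ∑ i, η i * Real.log (∑ j ∈ Finset.range M, γ i j ^ t))
        atTop (nhds (P t)) := by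
    intro t ht
    rw [hP]
    apply tendsto_finset_sum
    intro i _
    have hpos' : (0:ℝ) < ∑' j, γ i j ^ t :=
      Summable.tsum_pos (hsumm i t ht) (fun j => (Real.rpow_pos_of_pos (hγpos i j) t).le)
        0 (Real.rpow_pos_of_pos (hγpos i 0) t)
    exact (((hsumm i t ht).hasSum.tendsto_sum_nat).log hpos'.ne').const_mul (η i)
  refine ⟨mono, ?_⟩
  -- shifted sequence
  set g : ℕ → ℝ := fun n => hseq (n + 2) with hgdef
  have hgmono : Monotone g := by
    apply monotone_nat_of_le_succ
    intro n
    have := mono (n + 2) (by omega)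
    simpa [hgdef, Nat.add_right_comm] using this
  have hgbdd : ∀ n, g n ≤ h := fun n => hle_h (n + 2) (by omega)
  have hbdd : BddAbove (Set.range g) := ⟨h, by rintro x ⟨n, rfl⟩; exact hgbdd n⟩
  have htend : Tendsto g atTop (nhds (⨆ n, g n)) := tendsto_atTop_ciSup hgmono hbdd
  have hsup_le : (⨆ n, g n) ≤ h := ciSup_le hgbdd
  have hle_sup : h ≤ ⨆ n, g n := by
    apply le_of_forall_lt
    intro c hc
    have hmax : max c θ < h := max_lt hc hh.1
    obtain ⟨t, ht1, ht2⟩ := exists_between hmax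
    have hθt : θ < t := lt_of_le_of_lt (le_max_right c θ) ht1
    have hPt : 0 < P t := hPpos t hθt ht2
    have hev : ∀ᶠ M in atTop,
        0 < ∑ i, η i * Real.log (∑ j ∈ Finset.range M, γ i j ^ t) :=
      (hQtendsto t hθt).eventually (eventually_gt_nhds hPt)
    obtain ⟨M, hM0, hM2⟩ := (hev.and (eventually_ge_atTop 2)).exists
    obtain ⟨hp, he⟩ := hhseq M hM2
    have htm : t < hseq M := by
      by_contra hcon
      push_neg at hcon
      rcases eq_or_lt_of_le hcon with heq | hlt
      · rw [← heq] at hM0; linarith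
      · have := hQanti M (by omega) _ _ hlt
        rw [he] at this
        linarith
    have hMg : hseq M = g (M - 2) := by
      simp only [hgdef]
      congr 1
      omega
    calc c ≤ max c θ := le_max_left c θ
      _ < t := ht1
      _ < hseq M := htm
      _ = g (M - 2) := hMg
      _ ≤ ⨆ n, g n := le_ciSup hbdd (M - 2)
  have hsup : (⨆ n, g n) = h := le_antisymm hsup_le hle_sup
  rw [hsup] at htend
  exact (tendsto_add_atTop_iff_nat 2).mp htend
end

section
/- The countable-alphabet pressure function P(t) = ∑_{i=1}^∞ η_i · log(∑_{j=1}^∞ γ_{ij}^t) is well defined, strictly decreasing, convex and continuous on (θ, ∞), and if there exists u ∈ (θ, ∞) with P(u) > 0 then there is a unique h ∈ (θ, ∞) with P(h) = 0. -/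
open Real Filter

lemma my_tsum_holder (f g : ℕ → ℝ) (hf : ∀ n, 0 ≤ f n) (hg : ∀ n, 0 ≤ g n)
    (hfs : Summable f) (hgs : Summable g) (hF : 0 < ∑' n, f n) (hG : 0 < ∑' n, g n)
    (a b : ℝ) (ha : 0 ≤ a) (hb : 0 ≤ b) (hab : a + b = 1) :
    ∑' n, f n ^ a * g n ^ b ≤ (∑' n, f n) ^ a * (∑' n, g n) ^ b := by
  set F := ∑' n, f n with hFdef
  set G := ∑' n, g n with hGdef
  have hFG : 0 < F ^ a * G ^ b := mul_pos (rpow_pos_of_pos hF a) (rpow_pos_of_pos hG b)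
  have key : ∀ n, f n ^ a * g n ^ b ≤ F ^ a * G ^ b * (a * (f n / F) + b * (g n / G)) := by
    intro n
    have hy := Real.geom_mean_le_arith_mean2_weighted ha hb
      (div_nonneg (hf n) hF.le) (div_nonneg (hg n) hG.le) hab
    have := mul_le_mul_of_nonneg_left hy hFG.le
    calc f n ^ a * g n ^ b
        = F ^ a * G ^ b * ((f n / F) ^ a * (g n / G) ^ b) := by
          rw [Real.div_rpow (hf n) hF.le, Real.div_rpow (hg n) hG.le]
          field_simp
      _ ≤ F ^ a * G ^ b * (a * (f n / F) + b * (g n / G)) := this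
  have hsum2 : Summable (fun n => F ^ a * G ^ b * (a * (f n / F) + b * (g n / G))) := by
    apply Summable.mul_left
    exact ((hfs.div_const F).mul_left a).add ((hgs.div_const G).mul_left b)
  have hsum1 : Summable (fun n => f n ^ a * g n ^ b) := by
    apply Summable.of_nonneg_of_le
      (fun n => mul_nonneg (rpow_nonneg (hf n) a) (rpow_nonneg (hg n) b)) key hsum2
  calc ∑' n, f n ^ a * g n ^ b ≤ ∑' n, F ^ a * G ^ b * (a * (f n / F) + b * (g n / G)) :=
        Summable.tsum_le_tsum key hsum1 hsum2
    _ = F ^ a * G ^ b * (a * (F / F) + b * (G / G)) := by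
        rw [tsum_mul_left]
        congr 1
        rw [Summable.tsum_add ((hfs.div_const F).mul_left a) ((hgs.div_const G).mul_left b),
          tsum_mul_left, tsum_mul_left]
        congr 1 <;> rw [← tsum_div_const]
    _ = F ^ a * G ^ b := by
        rw [div_self hF.ne', div_self hG.ne']
        simp [hab]

set_option maxHeartbeats 1000000 in
/-- The countable-alphabet pressure
`P t = ∑ᵢ ηᵢ · log (∑ⱼ γᵢⱼ^t)` is well defined (absolutely convergent), strictly decreasing,
convex and continuous on `(θ, ∞)`; and if `P u > 0` for some `u > θ`, it has a unique zero
`h ∈ (θ, ∞)`. -/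
theorem countable_pressure_properties
    (η : ℕ → ℝ) (hηpos : ∀ i, 0 < η i)
    (hηsum : Summable η) (hη1 : ∑' i, η i = 1)
    (γ : ℕ → ℕ → ℝ) (hγpos : ∀ i j, 0 < γ i j)
    (hγsum : ∃ B : ℝ, ∀ i, Summable (fun j => γ i j) ∧ ∑' j, γ i j ≤ B)
    (hγsup : ∃ C : ℝ, C < 1 ∧ ∀ i j, γ i j ≤ C)
    (θ : ℝ)
    (hθ : θ = sInf {t : ℝ | 0 < t ∧
      ∃ B : ℝ, ∀ i, Summable (fun j => γ i j ^ t) ∧ ∑' j, γ i j ^ t ≤ B})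
    (hbound : ∀ t : ℝ, θ < t → ∃ M : ℝ, ∀ i,
      Summable (fun j => γ i j ^ t) ∧ |Real.log (∑' j, γ i j ^ t)| ≤ M)
    (P : ℝ → ℝ)
    (hP : ∀ t : ℝ, P t = ∑' i : ℕ, η i * Real.log (∑' j, γ i j ^ t)) :
    (∀ t ∈ Set.Ioi θ, Summable (fun i : ℕ => η i * Real.log (∑' j, γ i j ^ t))) ∧
    StrictAntiOn P (Set.Ioi θ) ∧ ConvexOn ℝ (Set.Ioi θ) P ∧ ContinuousOn P (Set.Ioi θ) ∧
    ((∃ u ∈ Set.Ioi θ, 0 < P u) → ∃! h : ℝ, h ∈ Set.Ioi θ ∧ P h = 0) := by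
  obtain ⟨C, hC1, hCle⟩ := hγsup
  have hC0 : 0 < C := (hγpos 0 0).trans_le (hCle 0 0)
  have hlogC : Real.log C < 0 := Real.log_neg hC0 hC1
  -- positivity of inner sums
  have hSpos : ∀ (i : ℕ) (t : ℝ), Summable (fun j => γ i j ^ t) → 0 < ∑' j, γ i j ^ t := by
    intro i t hs
    exact Summable.tsum_pos hs (fun j => (Real.rpow_pos_of_pos (hγpos i j) t).le) 0
      (Real.rpow_pos_of_pos (hγpos i 0) t)
  -- summability statement
  have summ : ∀ t ∈ Set.Ioi θ, Summable (fun i : ℕ => η i * Real.log (∑' j, γ i j ^ t)) := by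
    intro t ht
    obtain ⟨M, hM⟩ := hbound t ht
    apply Summable.of_abs
    apply Summable.of_nonneg_of_le (fun i => abs_nonneg _) ?_ (hηsum.mul_right M)
    intro i
    rw [abs_mul, abs_of_pos (hηpos i)]
    exact mul_le_mul_of_nonneg_left ((hM i).2) (hηpos i).le
  -- key decay inequality
  have hstep : ∀ s t : ℝ, θ < s → s < t → P t ≤ P s + (t - s) * Real.log C := by
    intro s t hs hst
    have ht : θ < t := hs.trans hst
    obtain ⟨Ms, hMs⟩ := hbound s hs
    obtain ⟨Mt, hMt⟩ := hbound t ht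
    have hlogle : ∀ i, Real.log (∑' j, γ i j ^ t) ≤
        (t - s) * Real.log C + Real.log (∑' j, γ i j ^ s) := by
      intro i
      have hterm : ∀ j, γ i j ^ t ≤ γ i j ^ s * C ^ (t - s) := by
        intro j
        have h1 : γ i j ^ t = γ i j ^ s * γ i j ^ (t - s) := by
          rw [← Real.rpow_add (hγpos i j)]; ring_nf
        rw [h1]
        exact mul_le_mul_of_nonneg_left
          (Real.rpow_le_rpow (hγpos i j).le (hCle i j) (by linarith))
          (Real.rpow_nonneg (hγpos i j).le s)
      have hsum : (∑' j, γ i j ^ t) ≤ C ^ (t - s) * ∑' j, γ i j ^ s := by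
        calc (∑' j, γ i j ^ t) ≤ ∑' j, γ i j ^ s * C ^ (t - s) :=
              Summable.tsum_le_tsum hterm (hMt i).1 ((hMs i).1.mul_right _)
          _ = C ^ (t - s) * ∑' j, γ i j ^ s := by rw [tsum_mul_right]; ring
      calc Real.log (∑' j, γ i j ^ t) ≤ Real.log (C ^ (t - s) * ∑' j, γ i j ^ s) :=
            Real.log_le_log (hSpos i t (hMt i).1) hsum
        _ = (t - s) * Real.log C + Real.log (∑' j, γ i j ^ s) := by
            rw [Real.log_mul (Real.rpow_pos_of_pos hC0 _).ne' (hSpos i s (hMs i).1).ne',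
              Real.log_rpow hC0]
    have hsum2 : Summable (fun i => η i * ((t - s) * Real.log C +
        Real.log (∑' j, γ i j ^ s))) := by
      simp_rw [mul_add]
      exact (hηsum.mul_right _).add (summ s hs)
    calc P t = ∑' i, η i * Real.log (∑' j, γ i j ^ t) := hP t
      _ ≤ ∑' i, η i * ((t - s) * Real.log C + Real.log (∑' j, γ i j ^ s)) := by
          apply Summable.tsum_le_tsum ?_ (summ t ht) hsum2
          exact fun i => mul_le_mul_of_nonneg_left (hlogle i) (hηpos i).le
      _ = P s + (t - s) * Real.log C := by
          simp_rw [mul_add]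
          rw [Summable.tsum_add (hηsum.mul_right _) (summ s hs), tsum_mul_right, hη1, hP s]
          ring
  have hanti : StrictAntiOn P (Set.Ioi θ) := by
    intro s hs t ht hst
    have := hstep s t hs hst
    nlinarith [mul_neg_of_pos_of_neg (by linarith : (0:ℝ) < t - s) hlogC]
  have hconv : ConvexOn ℝ (Set.Ioi θ) P := by
    refine ⟨convex_Ioi θ, ?_⟩
    intro s hs r hr a b ha hb hab
    have htmem : a • s + b • r ∈ Set.Ioi θ := (convex_Ioi θ) hs hr ha hb hab
    obtain ⟨Ms, hMs⟩ := hbound s hs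
    obtain ⟨Mr, hMr⟩ := hbound r hr
    obtain ⟨Mt, hMt⟩ := hbound _ htmem
    simp only [smul_eq_mul] at htmem ⊢
    have hlogle : ∀ i, Real.log (∑' j, γ i j ^ (a * s + b * r)) ≤
        a * Real.log (∑' j, γ i j ^ s) + b * Real.log (∑' j, γ i j ^ r) := by
      intro i
      have heq : ∀ j, γ i j ^ (a * s + b * r) = (γ i j ^ s) ^ a * (γ i j ^ r) ^ b := by
        intro j
        rw [Real.rpow_add (hγpos i j), ← Real.rpow_mul (hγpos i j).le s a,
          ← Real.rpow_mul (hγpos i j).le r b, mul_comm s a, mul_comm r b]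
      have hH := my_tsum_holder (fun j => γ i j ^ s) (fun j => γ i j ^ r)
        (fun j => Real.rpow_nonneg (hγpos i j).le s)
        (fun j => Real.rpow_nonneg (hγpos i j).le r)
        (hMs i).1 (hMr i).1 (hSpos i s (hMs i).1) (hSpos i r (hMr i).1) a b ha hb hab
      have hle : (∑' j, γ i j ^ (a * s + b * r)) ≤
          (∑' j, γ i j ^ s) ^ a * (∑' j, γ i j ^ r) ^ b := by
        calc (∑' j, γ i j ^ (a * s + b * r)) = ∑' j, (γ i j ^ s) ^ a * (γ i j ^ r) ^ b :=
              tsum_congr heq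
          _ ≤ _ := hH
      calc Real.log (∑' j, γ i j ^ (a * s + b * r)) ≤
            Real.log ((∑' j, γ i j ^ s) ^ a * (∑' j, γ i j ^ r) ^ b) :=
            Real.log_le_log (hSpos i _ (hMt i).1) hle
        _ = a * Real.log (∑' j, γ i j ^ s) + b * Real.log (∑' j, γ i j ^ r) := by
            rw [Real.log_mul (Real.rpow_pos_of_pos (hSpos i s (hMs i).1) a).ne'
              (Real.rpow_pos_of_pos (hSpos i r (hMr i).1) b).ne',
              Real.log_rpow (hSpos i s (hMs i).1), Real.log_rpow (hSpos i r (hMr i).1)]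
    have hsum2 : Summable (fun i => η i * (a * Real.log (∑' j, γ i j ^ s) +
        b * Real.log (∑' j, γ i j ^ r))) := by
      apply Summable.congr (((summ s hs).mul_left a).add ((summ r hr).mul_left b))
      intro i; ring
    calc P (a * s + b * r) = ∑' i, η i * Real.log (∑' j, γ i j ^ (a * s + b * r)) := hP _
      _ ≤ ∑' i, η i * (a * Real.log (∑' j, γ i j ^ s) + b * Real.log (∑' j, γ i j ^ r)) :=
          Summable.tsum_le_tsum (fun i => mul_le_mul_of_nonneg_left (hlogle i) (hηpos i).le)
            (summ _ htmem) hsum2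
      _ = a • P s + b • P r := by
          have : (fun i => η i * (a * Real.log (∑' j, γ i j ^ s) +
              b * Real.log (∑' j, γ i j ^ r))) = fun i =>
              a * (η i * Real.log (∑' j, γ i j ^ s)) +
              b * (η i * Real.log (∑' j, γ i j ^ r)) := by
            funext i; ring
          rw [this, Summable.tsum_add ((summ s hs).mul_left a) ((summ r hr).mul_left b),
            tsum_mul_left, tsum_mul_left, hP s, hP r, smul_eq_mul, smul_eq_mul]
  have hcont : ContinuousOn P (Set.Ioi θ) := hconv.continuousOn isOpen_Ioi
  refine ⟨summ, hanti, hconv, hcont, ?_⟩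
  rintro ⟨u, hu, hPu⟩
  set t := u + (P u + 1) / (-Real.log C) with htdef
  have hdivpos : 0 < (P u + 1) / (-Real.log C) := div_pos (by linarith) (by linarith)
  have hut : u < t := by rw [htdef]; linarith
  have ht : t ∈ Set.Ioi θ := Set.mem_Ioi.mpr (lt_trans hu hut)
  have hPt : P t ≤ -1 := by
    have h1 := hstep u t hu hut
    have h2 : (t - u) * Real.log C = -(P u + 1) := by
      have hne : Real.log C ≠ 0 := ne_of_lt hlogC
      have htu : t - u = (P u + 1) / (-Real.log C) := by rw [htdef]; ring
      rw [htu, div_mul_eq_mul_div, mul_div_assoc, div_neg, div_self hne]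
      ring
    linarith
  have hIcc : Set.Icc u t ⊆ Set.Ioi θ := fun x hx => lt_of_lt_of_le hu hx.1
  have hivt := intermediate_value_Icc' hut.le (hcont.mono hIcc)
  have h0mem : (0:ℝ) ∈ Set.Icc (P t) (P u) := ⟨by linarith, hPu.le⟩
  obtain ⟨h, hh, hPh⟩ := hivt h0mem
  refine ⟨h, ⟨hIcc hh, hPh⟩, ?_⟩
  rintro y ⟨hy, hPy⟩
  exact hanti.injOn hy (hIcc hh) (by rw [hPy, hPh])
end

section
/- The dimension function H_G is constant on each set F(η), and for every x ∈ Q_G and every ε > 0 the function H_G attains all its possible values already on Q_G ∩ (x − ε, x + ε); that is, H_G(Q_G ∩ (x − ε, x + ε)) = H_G(Q_G) as sets of values. -/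
open Real Filter

/-- The Gauss map `T x = 1/x - ⌊1/x⌋`. -/
noncomputable def gaussT (x : ℝ) : ℝ := x⁻¹ - ⌊x⁻¹⌋

/-- The `k+1`-st digit of `x` in the continued fraction expansion: `d_{k+1}(x) = ⌊1/T^k x⌋`. -/
noncomputable def cfDigit (k : ℕ) (x : ℝ) : ℤ := ⌊(gaussT^[k] x)⁻¹⌋

/-- The set `F(η)` of `η`-quasinormal numbers for the continued fraction expansion. -/
def cfFreqSet (η : ℕ+ → ℝ) : Set ℝ :=
  {x | x ∈ Set.Ioo (0 : ℝ) 1 ∧ Irrational x ∧ ∀ i : ℕ+,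
    Tendsto (fun n => (((Finset.range n).filter
        (fun k => cfDigit k x = ((i : ℕ) : ℤ))).card : ℝ) / n) atTop (nhds (η i))}

/-- An infinite stochastic vector with positive entries and finite entropy sum. -/
def cfStochastic (η : ℕ+ → ℝ) : Prop :=
  (∀ i, 0 < η i) ∧ Summable η ∧ (∑' i, η i = 1) ∧
    Summable (fun i => η i * |Real.log (η i)|)

/-!
`H` is constant on `F(η)` because `H x` is a zero of the pressure `P_η`, and that zero is
unique. For the local range, digit frequencies do not see a finite prefix. The inverse branch of
`T^[2n]` through `x` contracts by `2⁻ⁿ`, so putting the first `2n` digits of `x` in front of any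
`y ∈ F(η)` gives a point of `F(η)` within `2⁻ⁿ` of `x`, where `H` takes the value `H y`.
-/

open Finset Topology

lemma card_filter_range_add (p : ℕ → Prop) [DecidablePred p] (m n : ℕ) :
    #{k ∈ range (m + n) | p k} = #{k ∈ range m | p k} + #{k ∈ range n | p (m + k)} := by
  simp only [card_filter, sum_range_add]

lemma tendsto_card_filter_range_div_of_shift {p q : ℕ → Prop} [DecidablePred p]
    [DecidablePred q] {m : ℕ} (hpq : ∀ k, p (m + k) ↔ q k) {L : ℝ}
    (hq : Tendsto (fun n : ℕ => (#{k ∈ range n | q k} : ℝ) / n) atTop (𝓝 L)) :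
    Tendsto (fun n : ℕ => (#{k ∈ range n | p k} : ℝ) / n) atTop (𝓝 L) := by
  rw [← tendsto_add_atTop_iff_nat m]
  set A : ℝ := ↑(#{k ∈ range m | p k})
  have hsplit : ∀ n : ℕ, (#{k ∈ range (n + m) | p k} : ℝ) / ↑(n + m)
      = A / (n + m) + (#{k ∈ range n | q k} : ℝ) / n * (n / (n + m)) := by
    intro n
    rw [add_comm n m, card_filter_range_add]
    simp only [hpq]
    rcases n.eq_zero_or_pos with rfl | hn
    · simp [A]
    · push_cast
      field_simp
      ring
  simp only [hsplit]
  simpa using (tendsto_const_div_atTop_nhds_zero_nat A).comp (tendsto_add_atTop_nat m)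
    |>.add (hq.mul (tendsto_natCast_div_add_atTop (m : ℝ)))

def cfDomain : Set ℝ := {x | x ∈ Set.Ioo 0 1 ∧ Irrational x}

lemma one_le_cfDigit_zero {x : ℝ} (hx : x ∈ Set.Ioo 0 1) : 1 ≤ cfDigit 0 x := by
  rw [cfDigit, Function.iterate_zero_apply, Int.le_floor, Int.cast_one]
  exact (one_le_inv₀ hx.1).2 hx.2.le

lemma mapsTo_gaussT_cfDomain : Set.MapsTo gaussT cfDomain cfDomain := by
  intro x hx
  have hirr : Irrational (gaussT x) := hx.2.inv.sub_intCast _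
  refine ⟨⟨?_, ?_⟩, hirr⟩
  · exact (Int.fract_nonneg x⁻¹).lt_of_ne' hirr.ne_zero
  · exact Int.fract_lt_one x⁻¹

lemma cfDigit_add (m k : ℕ) (x : ℝ) : cfDigit (m + k) x = cfDigit k (gaussT^[m] x) := by
  rw [cfDigit, cfDigit, add_comm, Function.iterate_add_apply]

lemma inv_cfDigit_zero_add_gaussT (x : ℝ) : ((cfDigit 0 x : ℝ) + gaussT x)⁻¹ = x := by
  simp [cfDigit, gaussT]

lemma gaussT_inv_intCast_add (a : ℤ) {w : ℝ} (hw : w ∈ Set.Ico 0 1) :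
    gaussT ((a : ℝ) + w)⁻¹ = w := by
  rw [gaussT, inv_inv, Int.floor_intCast_add, Int.floor_eq_zero_iff.2 hw]
  simp

lemma abs_inv_add_inv_sub_le {a b u v : ℝ} (ha : 1 ≤ a) (hb : 1 ≤ b) (hu : 0 ≤ u)
    (hv : 0 ≤ v) : |(a + (b + u)⁻¹)⁻¹ - (a + (b + v)⁻¹)⁻¹| ≤ |u - v| / 2 := by
  have hDu : 2 ≤ a * (b + u) + 1 := by nlinarith
  have hDv : 2 ≤ a * (b + v) + 1 := by nlinarith
  have key : (a + (b + u)⁻¹)⁻¹ - (a + (b + v)⁻¹)⁻¹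
      = (u - v) / ((a * (b + u) + 1) * (a * (b + v) + 1)) := by
    field_simp
    ring
  have hpos : 0 < (a * (b + u) + 1) * (a * (b + v) + 1) := by positivity
  rw [key, abs_div, abs_of_pos hpos]
  exact div_le_div_of_nonneg_left (abs_nonneg _) two_pos (by nlinarith)

/-- The point whose first `m` continued fraction digits are those of `x`, followed by the digits
of `w`. -/
noncomputable def gaussBranch : ℕ → ℝ → ℝ → ℝ
  | 0, _, w => w
  | m + 1, x, w => ((cfDigit 0 x : ℝ) + gaussBranch m (gaussT x) w)⁻¹

lemma gaussBranch_iterate_self (m : ℕ) (x : ℝ) : gaussBranch m x (gaussT^[m] x) = x := by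
  induction m generalizing x with
  | zero => rfl
  | succ m ih => rw [gaussBranch, Function.iterate_succ_apply, ih, inv_cfDigit_zero_add_gaussT]

lemma irrational_gaussBranch (m : ℕ) (x : ℝ) {w : ℝ} (hw : Irrational w) :
    Irrational (gaussBranch m x w) := by
  induction m generalizing x with
  | zero => exact hw
  | succ m ih => exact ((ih _).intCast_add _).inv

lemma gaussBranch_mem_Ioo (m : ℕ) {x w : ℝ} (hx : x ∈ cfDomain) (hw : w ∈ Set.Ioo 0 1) :
    gaussBranch m x w ∈ Set.Ioo 0 1 := by
  induction m generalizing x with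
  | zero => exact hw
  | succ m ih =>
    have hd : (1 : ℝ) ≤ cfDigit 0 x := by exact_mod_cast one_le_cfDigit_zero hx.1
    have hs := ih (mapsTo_gaussT_cfDomain hx)
    exact ⟨inv_pos.2 (by linarith [hs.1]), inv_lt_one_of_one_lt₀ (by linarith [hs.1])⟩

lemma iterate_gaussBranch (m : ℕ) {x w : ℝ} (hx : x ∈ cfDomain) (hw : w ∈ Set.Ioo 0 1) :
    gaussT^[m] (gaussBranch m x w) = w := by
  induction m generalizing x with
  | zero => rfl
  | succ m ih =>
    have hs := gaussBranch_mem_Ioo m (mapsTo_gaussT_cfDomain hx) hw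
    rw [gaussBranch, Function.iterate_succ_apply,
      gaussT_inv_intCast_add _ (Set.Ioo_subset_Ico_self hs), ih (mapsTo_gaussT_cfDomain hx)]

lemma abs_gaussBranch_sub_le (n : ℕ) {x u v : ℝ} (hx : x ∈ cfDomain) (hu : u ∈ Set.Ioo 0 1)
    (hv : v ∈ Set.Ioo 0 1) :
    |gaussBranch (2 * n) x u - gaussBranch (2 * n) x v| ≤ |u - v| / 2 ^ n := by
  induction n generalizing x with
  | zero => simp [gaussBranch]
  | succ n ih =>
    have hx' := mapsTo_gaussT_cfDomain hx
    have hx'' := mapsTo_gaussT_cfDomain hx'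
    calc |gaussBranch (2 * (n + 1)) x u - gaussBranch (2 * (n + 1)) x v|
        ≤ |gaussBranch (2 * n) (gaussT (gaussT x)) u
            - gaussBranch (2 * n) (gaussT (gaussT x)) v| / 2 :=
          abs_inv_add_inv_sub_le (by exact_mod_cast one_le_cfDigit_zero hx.1)
            (by exact_mod_cast one_le_cfDigit_zero hx'.1)
            (gaussBranch_mem_Ioo _ hx'' hu).1.le (gaussBranch_mem_Ioo _ hx'' hv).1.le
      _ ≤ |u - v| / 2 ^ n / 2 := by gcongr; exact ih hx''
      _ = |u - v| / 2 ^ (n + 1) := by ring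

lemma exists_iterate_gaussT_eq_near {x w ε : ℝ} (hx : x ∈ cfDomain) (hw : w ∈ cfDomain)
    (hε : 0 < ε) : ∃ z ∈ cfDomain, (∃ m, gaussT^[m] z = w) ∧ |z - x| < ε := by
  obtain ⟨n, hn⟩ := exists_pow_lt_of_lt_one hε (by norm_num : (1 / 2 : ℝ) < 1)
  have hxm := mapsTo_gaussT_cfDomain.iterate (2 * n) hx
  refine ⟨gaussBranch (2 * n) x w,
    ⟨gaussBranch_mem_Ioo _ hx hw.1, irrational_gaussBranch _ _ hw.2⟩,
    ⟨2 * n, iterate_gaussBranch _ hx hw.1⟩, ?_⟩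
  have hdist : |w - gaussT^[2 * n] x| < 1 := by
    rw [abs_sub_lt_iff]; constructor <;> linarith [hw.1.1, hw.1.2, hxm.1.1, hxm.1.2]
  calc |gaussBranch (2 * n) x w - x|
      = |gaussBranch (2 * n) x w - gaussBranch (2 * n) x (gaussT^[2 * n] x)| := by
        rw [gaussBranch_iterate_self]
    _ ≤ |w - gaussT^[2 * n] x| / 2 ^ n := abs_gaussBranch_sub_le n hx hw.1 hxm.1
    _ ≤ 1 / 2 ^ n := by gcongr
    _ < ε := by simpa [one_div_pow] using hn

lemma mem_cfFreqSet_of_iterate {η : ℕ+ → ℝ} {m : ℕ} {z : ℝ} (hz : z ∈ cfDomain)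
    (hmz : gaussT^[m] z ∈ cfFreqSet η) : z ∈ cfFreqSet η :=
  ⟨hz.1, hz.2, fun i =>
    tendsto_card_filter_range_div_of_shift (fun k => by rw [cfDigit_add]) (hmz.2.2 i)⟩

lemma cfDomain_subset_closure_cfFreqSet {η : ℕ+ → ℝ} (hη : (cfFreqSet η).Nonempty) :
    cfDomain ⊆ closure (cfFreqSet η) := by
  obtain ⟨y, hy⟩ := hη
  refine fun x hx => Metric.mem_closure_iff.2 fun ε hε => ?_
  obtain ⟨z, hz, ⟨m, rfl⟩, hzx⟩ := exists_iterate_gaussT_eq_near hx ⟨hy.1, hy.2.1⟩ hε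
  exact ⟨z, mem_cfFreqSet_of_iterate hz hy, by rwa [Real.dist_eq, abs_sub_comm]⟩

theorem HG_constant_on_freq_sets_and_locally_full_range_general
    (γ : ℕ+ → ℕ → ℝ) (θ : ℝ)
    (hzero : ∀ η : ℕ+ → ℝ, cfStochastic η →
      ∃! t : ℝ, t ∈ Set.Ioi θ ∧ ∑' i : ℕ+, η i * Real.log (∑' j, γ i j ^ t) = 0)
    (Q : Set ℝ)
    (hQ : Q = {x | ∃ η : ℕ+ → ℝ, cfStochastic η ∧ x ∈ cfFreqSet η})
    (H : ℝ → ℝ)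
    (hH : ∀ η : ℕ+ → ℝ, cfStochastic η → ∀ x ∈ cfFreqSet η,
      θ < H x ∧ ∑' i : ℕ+, η i * Real.log (∑' j, γ i j ^ (H x)) = 0) :
    (∀ η : ℕ+ → ℝ, cfStochastic η →
      ∀ x ∈ cfFreqSet η, ∀ y ∈ cfFreqSet η, H x = H y) ∧
    (∀ x ∈ Q, ∀ ε : ℝ, 0 < ε →
      H '' (Q ∩ Set.Ioo (x - ε) (x + ε)) = H '' Q) := by
  have hconst : ∀ η : ℕ+ → ℝ, cfStochastic η →
      ∀ x ∈ cfFreqSet η, ∀ y ∈ cfFreqSet η, H x = H y := fun η hη x hx y hy =>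
    (hzero η hη).unique (hH η hη x hx) (hH η hη y hy)
  refine ⟨hconst, fun x hx ε hε => ?_⟩
  subst hQ
  refine (Set.image_mono Set.inter_subset_left).antisymm ?_
  rintro _ ⟨y, ⟨η, hη, hy⟩, rfl⟩
  obtain ⟨_, -, hx⟩ := hx
  obtain ⟨z, hzx, hz⟩ := mem_closure_iff_nhds.1
    (cfDomain_subset_closure_cfFreqSet ⟨y, hy⟩ ⟨hx.1, hx.2.1⟩) _
    (Ioo_mem_nhds (sub_lt_self x hε) (lt_add_of_pos_right x hε))
  exact ⟨z, ⟨⟨η, hη, hz⟩, hzx⟩, hconst η hη z hz y hy⟩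

/-- The dimension function `H_G` for the continued fraction expansion is
constant on each set `F(η)`, and on any neighbourhood of any quasinormal number it already
attains all of its possible values. -/
theorem HG_constant_on_freq_sets_and_locally_full_range
    (γ : ℕ+ → ℕ → ℝ) (hγpos : ∀ i j, 0 < γ i j)
    (hγsum : ∃ B : ℝ, ∀ i, Summable (fun j => γ i j) ∧ ∑' j, γ i j ≤ B)
    (hγsup : ∃ C : ℝ, C < 1 ∧ ∀ i j, γ i j ≤ C)
    (θ : ℝ)
    (hθ : θ = sInf {t : ℝ | 0 < t ∧
      ∃ B : ℝ, ∀ i, Summable (fun j => γ i j ^ t) ∧ ∑' j, γ i j ^ t ≤ B})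
    (hbound : ∀ t : ℝ, θ < t → ∃ M : ℝ, ∀ i,
      Summable (fun j => γ i j ^ t) ∧ |Real.log (∑' j, γ i j ^ t)| ≤ M)
    (hzero : ∀ η : ℕ+ → ℝ, cfStochastic η →
      ∃! t : ℝ, t ∈ Set.Ioi θ ∧ ∑' i : ℕ+, η i * Real.log (∑' j, γ i j ^ t) = 0)
    (Q : Set ℝ)
    (hQ : Q = {x | ∃ η : ℕ+ → ℝ, cfStochastic η ∧ x ∈ cfFreqSet η})
    (H : ℝ → ℝ)
    (hH : ∀ η : ℕ+ → ℝ, cfStochastic η → ∀ x ∈ cfFreqSet η,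
      θ < H x ∧ ∑' i : ℕ+, η i * Real.log (∑' j, γ i j ^ (H x)) = 0) :
    (∀ η : ℕ+ → ℝ, cfStochastic η →
      ∀ x ∈ cfFreqSet η, ∀ y ∈ cfFreqSet η, H x = H y) ∧
    (∀ x ∈ Q, ∀ ε : ℝ, 0 < ε →
      H '' (Q ∩ Set.Ioo (x - ε) (x + ε)) = H '' Q) :=
  HG_constant_on_freq_sets_and_locally_full_range_general γ θ hzero Q hQ H hH
end
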